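/- arXiv:math/0205269 — 3 statements merged into one kernel-verified Lean document; each statement's English description precedes it below -/
import Mathlib

section
/- Let p ≥ 2 and let f ∈ C^∞(ℝ^p) have everywhere positive definite Hessian H(f)(x) = (∂_i∂_j f(x)). Then ψ_f ∈ Ψ, i.e. for every x ∈ ℝ^p and every X ≠ 0 the Jacobi form 𝒥_{ψ_f}(x;X) is positive semidefinite with null space exactly ℝ·X (positive semidefinite of rank p−1). -/
open scoped BigOperators

/-- The partial derivative `∂ₖ f` at `x`. -/
noncomputable def pd {p : ℕ} (f : (Fin p → ℝ) → ℝ) (k : Fin p) (x : Fin p → ℝ) : ℝ :=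
  fderiv ℝ f x (Pi.single k 1)

/-- The second partial derivative `∂ₖ ∂ₗ f` at `x`. -/
noncomputable def pd2 {p : ℕ} (f : (Fin p → ℝ) → ℝ) (k l : Fin p) (x : Fin p → ℝ) : ℝ :=
  pd (pd f l) k x

/-- The curvature components
`R_ψ(i,j,k,l) := -(1/2)(ψ_{il/jk} + ψ_{jk/il} - ψ_{ik/jl} - ψ_{jl/ik})`,
where `ψ_{ab/cd} := ∂_c ∂_d ψ_{ab}`. -/
noncomputable def curv {p : ℕ} (ψ : (Fin p → ℝ) → Fin p → Fin p → ℝ)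
    (i j k l : Fin p) (x : Fin p → ℝ) : ℝ :=
  -(1/2) * (pd2 (fun y => ψ y i l) j k x + pd2 (fun y => ψ y j k) i l x
    - pd2 (fun y => ψ y i k) j l x - pd2 (fun y => ψ y j l) i k x)

/-- The Jacobi bilinear form `𝒥_ψ(x;X)(Y,Z) := Σ R_ψ(i,j,k,l)(x) Yᵢ Xⱼ Xₖ Zₗ`. -/
noncomputable def jacobiForm {p : ℕ} (ψ : (Fin p → ℝ) → Fin p → Fin p → ℝ)
    (x X Y Z : Fin p → ℝ) : ℝ :=
  ∑ i, ∑ j, ∑ k, ∑ l, curv ψ i j k l x * Y i * X j * X k * Z l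

/-- `ψ` is a smooth symmetric 2-tensor field on `ℝ^p`. -/
def IsSmoothSym {p : ℕ} (ψ : (Fin p → ℝ) → Fin p → Fin p → ℝ) : Prop :=
  (∀ i j, ContDiff ℝ (⊤ : ℕ∞) fun x => ψ x i j) ∧ ∀ x i j, ψ x i j = ψ x j i

/-- Membership in the class `Ψ`: `ψ` is a smooth symmetric 2-tensor field such that for every
`x` and every `X ≠ 0` the Jacobi form `𝒥_ψ(x;X)` is positive semidefinite with null space
exactly the line `ℝ·X` (i.e. positive semidefinite of rank `p-1`). -/
def MemPsi {p : ℕ} (ψ : (Fin p → ℝ) → Fin p → Fin p → ℝ) : Prop :=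
  IsSmoothSym ψ ∧ ∀ (x X : Fin p → ℝ), X ≠ 0 →
    (∀ Y, 0 ≤ jacobiForm ψ x X Y Y) ∧
    ∀ Y, (∀ Z, jacobiForm ψ x X Y Z = 0) ↔ ∃ c : ℝ, Y = c • X

/-- The symmetric 2-tensor field `(ψ_f)_{ij} := ∂ᵢf · ∂ⱼf`. -/
noncomputable def psiF {p : ℕ} (f : (Fin p → ℝ) → ℝ) : (Fin p → ℝ) → Fin p → Fin p → ℝ :=
  fun x i j => pd f i x * pd f j x

/-- The Hessian bilinear form of `f` at `x`: `H(X,Y) := Σᵢⱼ ∂ᵢ∂ⱼf(x) Xᵢ Yⱼ`. -/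
noncomputable def hessForm {p : ℕ} (f : (Fin p → ℝ) → ℝ) (x X Y : Fin p → ℝ) : ℝ :=
  ∑ i, ∑ j, pd2 f i j x * X i * Y j


section Aux

variable {p : ℕ}

lemma contDiff_pd {g : (Fin p → ℝ) → ℝ} (hg : ContDiff ℝ (⊤ : ℕ∞) g) (k : Fin p) :
    ContDiff ℝ (⊤ : ℕ∞) (pd g k) :=
  (hg.fderiv_right (by simp)).clm_apply contDiff_const

lemma pd_mul {g h : (Fin p → ℝ) → ℝ} {x : Fin p → ℝ} (hg : DifferentiableAt ℝ g x)
    (hh : DifferentiableAt ℝ h x) (k : Fin p) :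
    pd (fun y => g y * h y) k x = pd g k x * h x + g x * pd h k x := by
  simp only [pd, fderiv_fun_mul hg hh, ContinuousLinearMap.add_apply,
    ContinuousLinearMap.smul_apply, smul_eq_mul]
  ring

lemma pd_add {g h : (Fin p → ℝ) → ℝ} {x : Fin p → ℝ} (hg : DifferentiableAt ℝ g x)
    (hh : DifferentiableAt ℝ h x) (k : Fin p) :
    pd (fun y => g y + h y) k x = pd g k x + pd h k x := by
  simp only [pd, fderiv_fun_add hg hh, ContinuousLinearMap.add_apply]

lemma pd2_symm {g : (Fin p → ℝ) → ℝ} (hg : ContDiff ℝ (⊤ : ℕ∞) g) (a b : Fin p) (x : Fin p → ℝ) :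
    pd2 g a b x = pd2 g b a x := by
  have hd : ∀ y, HasFDerivAt g (fderiv ℝ g y) y := fun y =>
    (hg.differentiable (by simp) y).hasFDerivAt
  have hD : DifferentiableAt ℝ (fderiv ℝ g) x :=
    ((hg.fderiv_right (m := (⊤ : ℕ∞)) (by simp)).differentiable (by simp)) x
  have hsym := second_derivative_symmetric hd hD.hasFDerivAt
  have key : ∀ c d : Fin p, pd2 g c d x
      = fderiv ℝ (fderiv ℝ g) x (Pi.single c 1) (Pi.single d 1) := by
    intro c d
    show fderiv ℝ (fun y => (fderiv ℝ g y) (Pi.single d 1)) x (Pi.single c 1) = _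
    rw [fderiv_clm_apply hD (differentiableAt_const _)]
    simp
  rw [key a b, key b a, hsym]

lemma pd2_mul {g h : (Fin p → ℝ) → ℝ} (hg : ContDiff ℝ (⊤ : ℕ∞) g) (hh : ContDiff ℝ (⊤ : ℕ∞) h)
    (a b : Fin p) (x : Fin p → ℝ) :
    pd2 (fun y => g y * h y) a b x = pd2 g a b x * h x + pd g b x * pd h a x
      + pd g a x * pd h b x + g x * pd2 h a b x := by
  have dg : ∀ y, DifferentiableAt ℝ g y := fun y => hg.differentiable (by simp) y
  have dh : ∀ y, DifferentiableAt ℝ h y := fun y => hh.differentiable (by simp) y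
  have hgb := contDiff_pd hg b
  have hhb := contDiff_pd hh b
  have key : pd (fun y => g y * h y) b = fun y => pd g b y * h y + g y * pd h b y :=
    funext fun y => pd_mul (dg y) (dh y) b
  show pd (pd (fun y => g y * h y) b) a x = _
  rw [key, pd_add ((hgb.mul hh).differentiable (by simp) x) ((hg.mul hhb).differentiable (by simp) x) a,
    pd_mul ((hgb.differentiable (by simp)) x) (dh x) a,
    pd_mul (dg x) ((hhb.differentiable (by simp)) x) a]
  show pd2 g a b x * h x + pd g b x * pd h a x + (pd g a x * pd h b x + g x * pd2 h a b x) = _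
  ring

lemma T_swap23 {f : (Fin p → ℝ) → ℝ} (hf : ContDiff ℝ (⊤ : ℕ∞) f) (a b c : Fin p) (x : Fin p → ℝ) :
    pd2 (pd f c) a b x = pd2 (pd f b) a c x := by
  show pd (pd (pd f c) b) a x = pd (pd (pd f b) c) a x
  congr 1
  funext y
  exact pd2_symm hf b c y

lemma curv_psiF {f : (Fin p → ℝ) → ℝ} (hf : ContDiff ℝ (⊤ : ℕ∞) f) (i j k l : Fin p) (x : Fin p → ℝ) :
    curv (psiF f) i j k l x = pd2 f i l x * pd2 f j k x - pd2 f i k x * pd2 f j l x := by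
  have hpd : ∀ c, ContDiff ℝ (⊤ : ℕ∞) (pd f c) := fun c => contDiff_pd hf c
  have A : ∀ a b c d : Fin p, pd2 (fun y => psiF f y a b) c d x =
      pd2 (pd f a) c d x * pd f b x + pd (pd f a) d x * pd (pd f b) c x
      + pd (pd f a) c x * pd (pd f b) d x + pd f a x * pd2 (pd f b) c d x :=
    fun a b c d => pd2_mul (hpd a) (hpd b) c d x
  have T12 : ∀ a b c : Fin p, pd2 (pd f c) a b x = pd2 (pd f c) b a x :=
    fun a b c => pd2_symm (hpd c) a b x
  have T23 : ∀ a b c : Fin p, pd2 (pd f c) a b x = pd2 (pd f b) a c x :=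
    fun a b c => T_swap23 hf a b c x
  have e : ∀ a b : Fin p, pd (pd f a) b x = pd2 f b a x := fun a b => rfl
  have h1 : pd2 (pd f i) j k x = pd2 (pd f j) i k x :=
    (T12 j k i).trans ((T23 k j i).trans (T12 k i j))
  have h2 : pd2 (pd f l) j k x = pd2 (pd f k) j l x := T23 j k l
  have h3 : pd2 (pd f j) i l x = pd2 (pd f i) j l x :=
    (T12 i l j).trans ((T23 l i j).trans (T12 l j i))
  have h4 : pd2 (pd f k) i l x = pd2 (pd f l) i k x := T23 i l k
  have s1 : pd2 f k i x = pd2 f i k x := pd2_symm hf k i x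
  have s2 : pd2 f l j x = pd2 f j l x := pd2_symm hf l j x
  have s3 : pd2 f l i x = pd2 f i l x := pd2_symm hf l i x
  have s4 : pd2 f k j x = pd2 f j k x := pd2_symm hf k j x
  have s5 : pd2 f j i x = pd2 f i j x := pd2_symm hf j i x
  have s6 : pd2 f l k x = pd2 f k l x := pd2_symm hf l k x
  simp only [curv]
  rw [A i l j k, A j k i l, A i k j l, A j l i k]
  simp only [e]
  rw [h1, h2, h3, h4, s1, s2, s3, s4, s5, s6]
  ring

lemma sum_pair1 (A B : Fin p → Fin p → ℝ) (X Y Z : Fin p → ℝ) :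
    ∑ i, ∑ j, ∑ k, ∑ l, A i l * B j k * Y i * X j * X k * Z l
      = (∑ i, ∑ l, A i l * Y i * Z l) * (∑ j, ∑ k, B j k * X j * X k) := by
  rw [Finset.sum_mul_sum]
  refine Finset.sum_congr rfl fun i _ => ?_
  refine Finset.sum_congr rfl fun j _ => ?_
  rw [Finset.sum_mul_sum, Finset.sum_comm]
  exact Finset.sum_congr rfl fun k _ => Finset.sum_congr rfl fun l _ => by ring

lemma sum_pair2 (A B : Fin p → Fin p → ℝ) (X Y Z : Fin p → ℝ) :
    ∑ i, ∑ j, ∑ k, ∑ l, A i k * B j l * Y i * X j * X k * Z l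
      = (∑ i, ∑ k, A i k * Y i * X k) * (∑ j, ∑ l, B j l * X j * Z l) := by
  rw [Finset.sum_mul_sum]
  refine Finset.sum_congr rfl fun i _ => ?_
  refine Finset.sum_congr rfl fun j _ => ?_
  rw [Finset.sum_mul_sum]
  exact Finset.sum_congr rfl fun k _ => Finset.sum_congr rfl fun l _ => by ring

lemma jacobi_eq {f : (Fin p → ℝ) → ℝ} (hf : ContDiff ℝ (⊤ : ℕ∞) f) (x X Y Z : Fin p → ℝ) :
    jacobiForm (psiF f) x X Y Z
      = hessForm f x Y Z * hessForm f x X X - hessForm f x Y X * hessForm f x X Z := by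
  have expand : ∀ i j k l : Fin p, curv (psiF f) i j k l x * Y i * X j * X k * Z l =
      pd2 f i l x * pd2 f j k x * Y i * X j * X k * Z l
      - pd2 f i k x * pd2 f j l x * Y i * X j * X k * Z l := by
    intro i j k l; rw [curv_psiF hf]; ring
  simp only [jacobiForm, expand, Finset.sum_sub_distrib]
  rw [sum_pair1 (fun i l => pd2 f i l x) (fun j k => pd2 f j k x) X Y Z,
    sum_pair2 (fun i k => pd2 f i k x) (fun j l => pd2 f j l x) X Y Z]
  rfl

lemma hess_symm {f : (Fin p → ℝ) → ℝ} (hf : ContDiff ℝ (⊤ : ℕ∞) f) (x u v : Fin p → ℝ) :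
    hessForm f x u v = hessForm f x v u := by
  simp only [hessForm]
  rw [Finset.sum_comm]
  refine Finset.sum_congr rfl fun a _ => Finset.sum_congr rfl fun b _ => ?_
  rw [pd2_symm hf b a x]
  ring

lemma hess_left (f : (Fin p → ℝ) → ℝ) (x : Fin p → ℝ) (s t : ℝ) (U V W : Fin p → ℝ) :
    hessForm f x (s • U - t • V) W = s * hessForm f x U W - t * hessForm f x V W := by
  simp only [hessForm, Pi.sub_apply, Pi.smul_apply, smul_eq_mul, Finset.mul_sum,
    ← Finset.sum_sub_distrib]
  exact Finset.sum_congr rfl fun i _ => Finset.sum_congr rfl fun j _ => by ring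

lemma hess_right (f : (Fin p → ℝ) → ℝ) (x : Fin p → ℝ) (s t : ℝ) (U V W : Fin p → ℝ) :
    hessForm f x U (s • V - t • W) = s * hessForm f x U V - t * hessForm f x U W := by
  simp only [hessForm, Pi.sub_apply, Pi.smul_apply, smul_eq_mul, Finset.mul_sum,
    ← Finset.sum_sub_distrib]
  exact Finset.sum_congr rfl fun i _ => Finset.sum_congr rfl fun j _ => by ring

lemma hess_smul (f : (Fin p → ℝ) → ℝ) (x : Fin p → ℝ) (c : ℝ) (U V : Fin p → ℝ) :
    hessForm f x (c • U) V = c * hessForm f x U V := by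
  simp only [hessForm, Pi.smul_apply, smul_eq_mul, Finset.mul_sum]
  exact Finset.sum_congr rfl fun i _ => Finset.sum_congr rfl fun j _ => by ring

end Aux

/-- If `f` is smooth with everywhere positive definite Hessian, then
`ψ_f ∈ Ψ`: for every `x` and `X ≠ 0` the Jacobi form `𝒥_{ψ_f}(x;X)` is positive semidefinite
with null space exactly `ℝ·X` (positive semidefinite of rank `p-1`). -/
theorem stmt2 (p : ℕ) (hp : 2 ≤ p) (f : (Fin p → ℝ) → ℝ) (hf : ContDiff ℝ (⊤ : ℕ∞) f)
    (hH : ∀ (x X : Fin p → ℝ), X ≠ 0 → 0 < hessForm f x X X) :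
    MemPsi (psiF f) := by
  have hpd : ∀ c, ContDiff ℝ (⊤ : ℕ∞) (pd f c) := fun c => contDiff_pd hf c
  constructor
  · constructor
    · intro i j
      exact (hpd i).mul (hpd j)
    · intro x i j
      show pd f i x * pd f j x = pd f j x * pd f i x
      exact mul_comm _ _
  · intro x X hX
    have hXX : 0 < hessForm f x X X := hH x X hX
    have hJ : ∀ Y Z : Fin p → ℝ, jacobiForm (psiF f) x X Y Z
        = hessForm f x Y Z * hessForm f x X X - hessForm f x Y X * hessForm f x X Z :=
      fun Y Z => jacobi_eq hf x X Y Z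
    have hnonneg : ∀ W : Fin p → ℝ, 0 ≤ hessForm f x W W := by
      intro W
      by_cases hW : W = 0
      · subst hW
        simp [hessForm]
      · exact (hH x W hW).le
    constructor
    · intro Y
      rw [hJ Y Y]
      have hbsym : hessForm f x Y X = hessForm f x X Y := hess_symm hf x Y X
      set a := hessForm f x X X with ha
      set b := hessForm f x X Y with hb
      have key : 0 ≤ hessForm f x (a • Y - b • X) (a • Y - b • X) := hnonneg _
      have exp : hessForm f x (a • Y - b • X) (a • Y - b • X)
          = a * a * hessForm f x Y Y - a * b * hessForm f x Y X
            - b * a * hessForm f x X Y + b * b * a := by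
        rw [hess_left, hess_right f x a b Y Y X, hess_right f x a b X Y X]
        ring
      rw [exp, hbsym] at key
      rw [hbsym]
      nlinarith [key, hXX]
    · intro Y
      constructor
      · intro h
        set c : ℝ := hessForm f x Y X / hessForm f x X X with hc
        refine ⟨c, ?_⟩
        set W : Fin p → ℝ := Y - c • X with hWdef
        have hca : c * hessForm f x X X = hessForm f x Y X :=
          div_mul_cancel₀ _ (ne_of_gt hXX)
        have h2 := h W
        rw [hJ Y W] at h2
        have hWW : hessForm f x W W = 0 := by
          have eW : hessForm f x W W
              = hessForm f x Y W - c * hessForm f x X W := by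
            have := hess_left f x 1 c Y X W
            rw [one_smul] at this
            rw [hWdef, this, one_mul]
          have h3 : hessForm f x X X * (hessForm f x Y W - c * hessForm f x X W) = 0 := by
            linear_combination h2 - hessForm f x X W * hca
          rw [eW]
          exact (mul_eq_zero.mp h3).resolve_left (ne_of_gt hXX)
        have hW0 : W = 0 := by
          by_contra hne
          exact absurd hWW (ne_of_gt (hH x W hne))
        have : Y - c • X = 0 := hW0
        exact sub_eq_zero.mp this
      · rintro ⟨c, rfl⟩ Z
        rw [hJ (c • X) Z, hess_smul f x c X Z, hess_smul f x c X X]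
        ring
end

section
/- Let p ≥ 2, ψ ∈ Ψ, and 1 ≤ r ≤ p. For every point (x,y) and every spacelike r-dimensional subspace π of (ℝ^{2p}, g_ψ) (i.e. π of signature (0,r)), the higher order Jacobi operator satisfies rank J(π) = p−1 if r = 1 and rank J(π) = p if r ≥ 2. Since moreover J(π)² = 0, any two higher order Jacobi operators of spacelike r-dimensional subspaces (at possibly different points) are similar endomorphisms of ℝ^{2p}: (ℝ^{2p}, g_ψ) is Jordan Osserman of type (0,r). -/
open scoped BigOperators

/-- The model space `ℝ^{2p} = ℝ^p × ℝ^p`; `Sum.inl` indexes the `x`-coordinates and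
`Sum.inr` the `y`-coordinates. -/
abbrev VV (p : ℕ) := Fin p ⊕ Fin p → ℝ

/-- The neutral signature `(p,p)` metric `g_ψ` at the point with `x`-coordinate `x`:
`g(∂ᵢˣ,∂ⱼʸ) = δᵢⱼ`, `g(∂ᵢʸ,∂ⱼʸ) = 0`, `g(∂ᵢˣ,∂ⱼˣ) = ψᵢⱼ(x)`. -/
noncomputable def gpsi {p : ℕ} (ψ : (Fin p → ℝ) → Fin p → Fin p → ℝ)
    (x : Fin p → ℝ) (Z W : VV p) : ℝ :=
  (∑ i, Z (Sum.inl i) * W (Sum.inr i)) + (∑ i, Z (Sum.inr i) * W (Sum.inl i))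
    + ∑ i, ∑ j, ψ x i j * Z (Sum.inl i) * W (Sum.inl j)

/-- The Jacobi operator `J(x;Z)` of `(ℝ^{2p}, g_ψ)` as a matrix: its image lies in
`𝒴 = span{∂ᵢʸ}` and its `y`-components are
`(J(x;Z)W)_l = Σ_{i,j,k} R_ψ(i,j,k,l)(x) (ρW)ᵢ (ρZ)ⱼ (ρZ)ₖ`. -/
noncomputable def jacobiMat {p : ℕ} (ψ : (Fin p → ℝ) → Fin p → Fin p → ℝ)
    (x : Fin p → ℝ) (Z : VV p) : Matrix (Fin p ⊕ Fin p) (Fin p ⊕ Fin p) ℝ :=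
  Matrix.of fun a b =>
    match a, b with
    | Sum.inr l, Sum.inl i => ∑ j, ∑ k, curv ψ i j k l x * Z (Sum.inl j) * Z (Sum.inl k)
    | _, _ => 0

/-- `π` is a nondegenerate subspace of signature `(r,s)` for the symmetric bilinear form `g`:
`g` restricted to `π` is nondegenerate, the maximal dimension of a negative definite subspace
of `π` is `r`, and the maximal dimension of a positive definite subspace of `π` is `s`. -/
def HasSignature {V : Type*} [AddCommGroup V] [Module ℝ V] (g : V → V → ℝ)
    (π : Submodule ℝ V) (r s : ℕ) : Prop :=
  (∀ z ∈ π, (∀ w ∈ π, g z w = 0) → z = 0) ∧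
  (∃ W : Submodule ℝ V, W ≤ π ∧ Module.finrank ℝ W = r ∧ ∀ z ∈ W, z ≠ 0 → g z z < 0) ∧
  (∀ W : Submodule ℝ V, W ≤ π → (∀ z ∈ W, z ≠ 0 → g z z < 0) → Module.finrank ℝ W ≤ r) ∧
  (∃ W : Submodule ℝ V, W ≤ π ∧ Module.finrank ℝ W = s ∧ ∀ z ∈ W, z ≠ 0 → 0 < g z z) ∧
  (∀ W : Submodule ℝ V, W ≤ π → (∀ z ∈ W, z ≠ 0 → 0 < g z z) → Module.finrank ℝ W ≤ s)

/-- `e` is a `g`-orthonormal basis of `π` with signs `ε i = g(e i, e i) = ±1`. -/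
def IsOrthoBasis {V : Type*} [AddCommGroup V] [Module ℝ V] (g : V → V → ℝ)
    (π : Submodule ℝ V) {n : ℕ} (e : Fin n → V) (ε : Fin n → ℝ) : Prop :=
  Submodule.span ℝ (Set.range e) = π ∧ (∀ i, ε i = 1 ∨ ε i = -1) ∧
    ∀ i j, g (e i) (e j) = if i = j then ε i else 0

/-- The higher order Jacobi operator `J(π) := Σᵢ εᵢ J(x; eᵢ)` determined by a
`g_ψ`-orthonormal basis `e` with signs `ε` of a nondegenerate subspace. -/
noncomputable def hoJ {p : ℕ} (ψ : (Fin p → ℝ) → Fin p → Fin p → ℝ) (x : Fin p → ℝ)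
    {n : ℕ} (e : Fin n → VV p) (ε : Fin n → ℝ) :
    Matrix (Fin p ⊕ Fin p) (Fin p ⊕ Fin p) ℝ :=
  ∑ i, ε i • jacobiMat ψ x (e i)

/-- Two square matrices are similar (conjugate), i.e. they have the same Jordan normal form. -/
def MatSimilar {ι : Type*} [Fintype ι] [DecidableEq ι] (A B : Matrix ι ι ℝ) : Prop :=
  ∃ P : Matrix ι ι ℝ, IsUnit P.det ∧ A = P * B * P⁻¹

noncomputable def bmat {p : ℕ} (ψ : (Fin p → ℝ) → Fin p → Fin p → ℝ) (x : Fin p → ℝ)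
    {n : ℕ} (e : Fin n → VV p) (ε : Fin n → ℝ) : Matrix (Fin p) (Fin p) ℝ :=
  Matrix.of fun l i => ∑ m, ε m * ∑ j, ∑ k,
    curv ψ i j k l x * e m (Sum.inl j) * e m (Sum.inl k)

lemma hoJ_eq_fromBlocks {p : ℕ} (ψ : (Fin p → ℝ) → Fin p → Fin p → ℝ) (x : Fin p → ℝ)
    {n : ℕ} (e : Fin n → VV p) (ε : Fin n → ℝ) :
    hoJ ψ x e ε = Matrix.fromBlocks 0 0 (bmat ψ x e ε) 0 := by
  ext a b
  cases a <;> cases b <;>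
    simp [hoJ, jacobiMat, bmat, Matrix.sum_apply, Finset.mul_sum]

def e5 {n p : ℕ} : (Fin p × Fin p × Fin n × Fin p × Fin p) ≃ (Fin n × Fin p × Fin p × Fin p × Fin p) where
  toFun q := (q.2.2.1, q.2.1, q.2.2.2.1, q.2.2.2.2, q.1)
  invFun q := (q.2.2.2.2, q.2.1, q.1, q.2.2.1, q.2.2.2.1)
  left_inv := by rintro ⟨_,_,_,_,_⟩; rfl
  right_inv := by rintro ⟨_,_,_,_,_⟩; rfl

open Matrix in
lemma dot_bmat_mulVec {p : ℕ} (ψ : (Fin p → ℝ) → Fin p → Fin p → ℝ) (x : Fin p → ℝ)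
    {n : ℕ} (e : Fin n → VV p) (ε : Fin n → ℝ) (Y Z : Fin p → ℝ) :
    Z ⬝ᵥ (bmat ψ x e ε).mulVec Y
      = ∑ m, ε m * jacobiForm ψ x (fun j => e m (Sum.inl j)) Y Z := by
  unfold jacobiForm bmat
  simp only [dotProduct, Matrix.mulVec, Matrix.of_apply, Finset.sum_mul,
    Finset.mul_sum]
  simp only [← Fintype.sum_prod_type']
  exact Fintype.sum_equiv e5 _ _ (by rintro ⟨l,i,m,j,k⟩; simp only [e5, Equiv.coe_fn_mk]; ring)


section Aux2
variable {p : ℕ} {ψ : (Fin p → ℝ) → Fin p → Fin p → ℝ}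

lemma pd2_comm {f : (Fin p → ℝ) → ℝ} (hf : ContDiff ℝ (⊤ : ℕ∞) f) (k l : Fin p)
    (x : Fin p → ℝ) : pd2 f k l x = pd2 f l k x := by
  have hdf : Differentiable ℝ (fderiv ℝ f) := by
    have := hf.fderiv_right (m := 1) (WithTop.coe_le_coe.mpr le_top)
    exact this.differentiable one_ne_zero
  have h1 : ∀ (v w : Fin p → ℝ) (y : Fin p → ℝ),
      fderiv ℝ (fun z => fderiv ℝ f z v) y w = fderiv ℝ (fderiv ℝ f) y w v := by
    intro v w y
    have := fderiv_clm_apply (c := fderiv ℝ f) (u := fun _ => v) (hdf y)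
      (differentiableAt_const _)
    simp [this]
  have hsym := (hf.contDiffAt (x := x)).isSymmSndFDerivAt (by rw [minSmoothness_of_isRCLikeNormedField]; exact WithTop.coe_le_coe.mpr le_top)
  unfold pd2 pd
  rw [h1, h1, hsym]

lemma curv_swap12 (i j k l : Fin p) (x : Fin p → ℝ) :
    curv ψ j i k l x = -curv ψ i j k l x := by
  unfold curv; ring

lemma curv_swap34 (i j k l : Fin p) (x : Fin p → ℝ) :
    curv ψ i j l k x = -curv ψ i j k l x := by
  unfold curv; ring

lemma curv_pair (hψ : IsSmoothSym ψ) (i j k l : Fin p) (x : Fin p → ℝ) :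
    curv ψ k l i j x = curv ψ i j k l x := by
  have hsm := hψ.1
  have hsy := hψ.2
  have e : ∀ a b : Fin p, (fun y => ψ y a b) = (fun y => ψ y b a) := by
    intro a b; funext y; exact hsy y a b
  unfold curv
  rw [e k j, e l i, e k i, e l j]
  rw [pd2_comm (hsm j k) l i, pd2_comm (hsm i l) k j, pd2_comm (hsm i k) l j,
    pd2_comm (hsm j l) k i]
  ring

lemma curv_id (hψ : IsSmoothSym ψ) (i j k l : Fin p) (x : Fin p → ℝ) :
    curv ψ l k j i x = curv ψ i j k l x := by
  rw [curv_pair hψ j i l k x, curv_swap12, curv_swap34, neg_neg]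

def rev4 {p : ℕ} : (Fin p × Fin p × Fin p × Fin p) ≃ (Fin p × Fin p × Fin p × Fin p) where
  toFun x := (x.2.2.2, x.2.2.1, x.2.1, x.1)
  invFun x := (x.2.2.2, x.2.2.1, x.2.1, x.1)
  left_inv := by rintro ⟨a,b,c,d⟩; rfl
  right_inv := by rintro ⟨a,b,c,d⟩; rfl

lemma sum4_rev (f : Fin p → Fin p → Fin p → Fin p → ℝ) :
    ∑ i, ∑ j, ∑ k, ∑ l, f i j k l = ∑ i, ∑ j, ∑ k, ∑ l, f l k j i := by
  simp only [← Fintype.sum_prod_type']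
  exact Fintype.sum_equiv rev4 _ _ (by rintro ⟨a,b,c,d⟩; rfl)

lemma jacobiForm_symm (hψ : IsSmoothSym ψ) (x X Y Z : Fin p → ℝ) :
    jacobiForm ψ x X Y Z = jacobiForm ψ x X Z Y := by
  unfold jacobiForm
  rw [sum4_rev (fun i j k l => curv ψ i j k l x * Y i * X j * X k * Z l)]
  refine Finset.sum_congr rfl fun i _ => Finset.sum_congr rfl fun j _ =>
    Finset.sum_congr rfl fun k _ => Finset.sum_congr rfl fun l _ => ?_
  rw [curv_id hψ]; ring

noncomputable def jbil (ψ : (Fin p → ℝ) → Fin p → Fin p → ℝ)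
    (x X : Fin p → ℝ) : (Fin p → ℝ) →ₗ[ℝ] (Fin p → ℝ) →ₗ[ℝ] ℝ :=
  LinearMap.mk₂ ℝ (jacobiForm ψ x X)
    (by intro Y Y' Z; unfold jacobiForm
        simp only [Pi.add_apply, mul_add, add_mul, Finset.sum_add_distrib])
    (by intro c Y Z; unfold jacobiForm
        simp only [Pi.smul_apply, smul_eq_mul, Finset.mul_sum]
        refine Finset.sum_congr rfl fun i _ => Finset.sum_congr rfl fun j _ =>
          Finset.sum_congr rfl fun k _ => Finset.sum_congr rfl fun l _ => by ring)
    (by intro Y Z Z'; unfold jacobiForm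
        simp only [Pi.add_apply, mul_add, add_mul, Finset.sum_add_distrib])
    (by intro c Y Z; unfold jacobiForm
        simp only [Pi.smul_apply, smul_eq_mul, Finset.mul_sum]
        refine Finset.sum_congr rfl fun i _ => Finset.sum_congr rfl fun j _ =>
          Finset.sum_congr rfl fun k _ => Finset.sum_congr rfl fun l _ => by ring)

@[simp] lemma jbil_apply (x X Y Z : Fin p → ℝ) :
    jbil ψ x X Y Z = jacobiForm ψ x X Y Z := rfl

lemma coeff_zero (a b : ℝ) (h : ∀ t : ℝ, 0 ≤ b * t ^ 2 + a * t) : a = 0 := by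
  by_contra ha
  have hM : (0:ℝ) < max b 1 := lt_of_lt_of_le one_pos (le_max_right _ _)
  have ht := h (-a / (2 * max b 1))
  have hb : b ≤ max b 1 := le_max_left _ _
  have ha2 : 0 < a ^ 2 := by positivity
  rw [div_pow, neg_pow] at ht
  set M := max b 1 with hMdef
  have ht2 : 0 ≤ (b - 2 * M) * a ^ 2 := by
    have h1 : 0 ≤ (b * ((-1) ^ 2 * a ^ 2 / (2 * M) ^ 2) + a * (-a / (2 * M))) * (4 * M ^ 2) :=
      mul_nonneg ht (by positivity)
    have h2 : (b * ((-1) ^ 2 * a ^ 2 / (2 * M) ^ 2) + a * (-a / (2 * M))) * (4 * M ^ 2)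
        = (b - 2 * M) * a ^ 2 := by
      field_simp
      ring
    linarith
  nlinarith [mul_pos hM ha2,
    mul_le_mul_of_nonneg_right (show b - 2 * M ≤ -M by linarith) (le_of_lt ha2)]

lemma polarize (x X : Fin p → ℝ) (hpsd : ∀ Y, 0 ≤ jacobiForm ψ x X Y Y)
    (hψs : IsSmoothSym ψ) (Y : Fin p → ℝ) (hY : jacobiForm ψ x X Y Y = 0) :
    ∀ Z, jacobiForm ψ x X Y Z = 0 := by
  intro Z
  have key : ∀ t : ℝ, 0 ≤ jacobiForm ψ x X Z Z * t ^ 2 + (2 * jacobiForm ψ x X Y Z) * t := by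
    intro t
    have h0 := hpsd (Y + t • Z)
    have expand : jacobiForm ψ x X (Y + t • Z) (Y + t • Z)
        = jacobiForm ψ x X Y Y + t * jacobiForm ψ x X Y Z + t * jacobiForm ψ x X Z Y
          + t ^ 2 * jacobiForm ψ x X Z Z := by
      have := jbil (ψ := ψ) x X
      calc jacobiForm ψ x X (Y + t • Z) (Y + t • Z)
          = jbil ψ x X (Y + t • Z) (Y + t • Z) := rfl
        _ = _ := by
            simp only [map_add, map_smul, LinearMap.add_apply, LinearMap.smul_apply,
              smul_eq_mul, jbil_apply]
            ring
    rw [expand, hY, jacobiForm_symm hψs x X Z Y] at h0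
    calc (0:ℝ) ≤ _ := h0
      _ = _ := by ring
  have := coeff_zero _ _ key
  linarith

noncomputable def gbil (ψ : (Fin p → ℝ) → Fin p → Fin p → ℝ)
    (x : Fin p → ℝ) : VV p →ₗ[ℝ] VV p →ₗ[ℝ] ℝ :=
  LinearMap.mk₂ ℝ (gpsi ψ x)
    (by intro Z Z' W; unfold gpsi
        simp only [Pi.add_apply, mul_add, add_mul, Finset.sum_add_distrib]; ring)
    (by intro c Z W; unfold gpsi
        simp only [Pi.smul_apply, smul_eq_mul, Finset.mul_sum, mul_add]
        congr 1
        · congr 1 <;> exact Finset.sum_congr rfl fun i _ => by ring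
        · refine Finset.sum_congr rfl fun i _ => ?_
          exact Finset.sum_congr rfl fun j _ => by ring)
    (by intro Z W W'; unfold gpsi
        simp only [Pi.add_apply, mul_add, add_mul, Finset.sum_add_distrib]; ring)
    (by intro c Z W; unfold gpsi
        simp only [Pi.smul_apply, smul_eq_mul, Finset.mul_sum, mul_add]
        congr 1
        · congr 1 <;> exact Finset.sum_congr rfl fun i _ => by ring
        · refine Finset.sum_congr rfl fun i _ => ?_
          exact Finset.sum_congr rfl fun j _ => by ring)

@[simp] lemma gbil_apply (x : Fin p → ℝ) (Z W : VV p) :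
    gbil ψ x Z W = gpsi ψ x Z W := rfl

lemma gpsi_self_inl_zero (x : Fin p → ℝ) (Z : VV p) (h : ∀ i, Z (Sum.inl i) = 0) :
    gpsi ψ x Z Z = 0 := by
  unfold gpsi
  simp [h]

lemma gpsi_combo (x : Fin p → ℝ) {n : ℕ} (e : Fin n → VV p) (ε : Fin n → ℝ)
    (hob : ∀ i j, gpsi ψ x (e i) (e j) = if i = j then ε i else 0) (c : Fin n → ℝ) :
    gpsi ψ x (∑ m, c m • e m) (∑ m, c m • e m) = ∑ m, c m ^ 2 * ε m := by
  have h0 : gpsi ψ x (∑ m, c m • e m) (∑ m, c m • e m)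
      = gbil ψ x (∑ m, c m • e m) (∑ m, c m • e m) := rfl
  rw [h0, map_sum]
  have h1 : ∀ m, (gbil ψ x (∑ n, c n • e n)) (c m • e m) = c m * (c m * ε m) := by
    intro m
    simp only [map_smul, map_sum, LinearMap.sum_apply, LinearMap.smul_apply, smul_eq_mul,
      gbil_apply, hob, mul_ite, mul_zero, Finset.sum_ite_eq, Finset.sum_ite_eq',
      Finset.mem_univ, if_true]
  rw [Finset.sum_congr rfl fun m _ => h1 m]
  exact Finset.sum_congr rfl fun m _ => by ring

end Aux2

section Abstract
open Module Submodule LinearMap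

lemma exists_equiv_factor {V : Type*} [AddCommGroup V] [Module ℝ V] [FiniteDimensional ℝ V]
    (f g : V →ₗ[ℝ] V) (h : finrank ℝ (LinearMap.range f) = finrank ℝ (LinearMap.range g)) :
    ∃ a b : V ≃ₗ[ℝ] V, f = a.toLinearMap ∘ₗ g ∘ₗ b.toLinearMap := by
  obtain ⟨Cf, hCf⟩ := Submodule.exists_isCompl (LinearMap.ker f)
  obtain ⟨Cg, hCg⟩ := Submodule.exists_isCompl (LinearMap.ker g)
  obtain ⟨Df, hDf⟩ := Submodule.exists_isCompl (LinearMap.range f)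
  obtain ⟨Dg, hDg⟩ := Submodule.exists_isCompl (LinearMap.range g)
  let ef : Cf ≃ₗ[ℝ] LinearMap.range f :=
    (Submodule.quotientEquivOfIsCompl (LinearMap.ker f) Cf hCf).symm.trans f.quotKerEquivRange
  let eg : Cg ≃ₗ[ℝ] LinearMap.range g :=
    (Submodule.quotientEquivOfIsCompl (LinearMap.ker g) Cg hCg).symm.trans g.quotKerEquivRange
  have hef : ∀ c : Cf, (ef c : V) = f c := by
    intro c
    show ((f.quotKerEquivRange) ((Submodule.quotientEquivOfIsCompl _ Cf hCf).symm c) : V) = f c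
    rw [Submodule.quotientEquivOfIsCompl_symm_apply, LinearMap.quotKerEquivRange_apply_mk]
  have heg : ∀ c : Cg, (eg c : V) = g c := by
    intro c
    show ((g.quotKerEquivRange) ((Submodule.quotientEquivOfIsCompl _ Cg hCg).symm c) : V) = g c
    rw [Submodule.quotientEquivOfIsCompl_symm_apply, LinearMap.quotKerEquivRange_apply_mk]
  have hkk : finrank ℝ (LinearMap.ker f) = finrank ℝ (LinearMap.ker g) := by
    have h1 := LinearMap.finrank_range_add_finrank_ker f
    have h2 := LinearMap.finrank_range_add_finrank_ker g
    omega
  have hcc : finrank ℝ Cf = finrank ℝ Cg := by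
    rw [ef.finrank_eq, h, ← eg.finrank_eq]
  have hdd : finrank ℝ Dg = finrank ℝ Df := by
    have h1 := Submodule.finrank_add_eq_of_isCompl hDf
    have h2 := Submodule.finrank_add_eq_of_isCompl hDg
    omega
  let ekk : (LinearMap.ker f) ≃ₗ[ℝ] (LinearMap.ker g) := LinearEquiv.ofFinrankEq _ _ hkk
  let ecc : Cf ≃ₗ[ℝ] Cg := LinearEquiv.ofFinrankEq _ _ hcc
  let edd : Dg ≃ₗ[ℝ] Df := LinearEquiv.ofFinrankEq _ _ hdd
  let err : (LinearMap.range g) ≃ₗ[ℝ] (LinearMap.range f) :=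
    eg.symm.trans (ecc.symm.trans ef)
  let b : V ≃ₗ[ℝ] V :=
    ((Submodule.prodEquivOfIsCompl _ _ hCf).symm.trans (ekk.prodCongr ecc)).trans
      (Submodule.prodEquivOfIsCompl _ _ hCg)
  let a : V ≃ₗ[ℝ] V :=
    ((Submodule.prodEquivOfIsCompl _ _ hDg).symm.trans (err.prodCongr edd)).trans
      (Submodule.prodEquivOfIsCompl _ _ hDf)
  refine ⟨a, b, ?_⟩
  ext v
  obtain ⟨u, rfl⟩ := (Submodule.prodEquivOfIsCompl _ _ hCf).surjective v
  obtain ⟨k, c⟩ := u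
  have hv : (Submodule.prodEquivOfIsCompl _ _ hCf) (k, c) = (k : V) + (c : V) :=
    Submodule.coe_prodEquivOfIsCompl' _ _ hCf (k, c)
  have hbv : b ((Submodule.prodEquivOfIsCompl _ _ hCf) (k, c))
      = ((ekk k : V) + (ecc c : V)) := by
    show (Submodule.prodEquivOfIsCompl _ _ hCg) ((ekk.prodCongr ecc)
      ((Submodule.prodEquivOfIsCompl _ _ hCf).symm
        ((Submodule.prodEquivOfIsCompl _ _ hCf) (k, c)))) = _
    rw [LinearEquiv.symm_apply_apply]
    exact Submodule.coe_prodEquivOfIsCompl' _ _ hCg _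
  have hgbv : g (b ((Submodule.prodEquivOfIsCompl _ _ hCf) (k, c))) = (eg (ecc c) : V) := by
    rw [hbv, map_add, (ekk k).2, zero_add, heg]
  have haw : ∀ w : LinearMap.range g, a (w : V) = (err w : V) := by
    intro w
    show (Submodule.prodEquivOfIsCompl _ _ hDf) ((err.prodCongr edd)
      ((Submodule.prodEquivOfIsCompl _ _ hDg).symm (w : V))) = _
    rw [Submodule.prodEquivOfIsCompl_symm_apply_left _ _ hDg w]
    show (Submodule.prodEquivOfIsCompl _ _ hDf) (err w, edd 0) = _
    rw [map_zero]
    have := Submodule.coe_prodEquivOfIsCompl' _ _ hDf (err w, 0)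
    simpa using this
  have herr : (err (eg (ecc c)) : V) = f c := by
    show (ef (ecc.symm (eg.symm (eg (ecc c)))) : V) = f c
    rw [LinearEquiv.symm_apply_apply, LinearEquiv.symm_apply_apply, hef]
  simp only [LinearMap.comp_apply, LinearEquiv.coe_coe]
  rw [hgbv, haw, herr, hv, map_add]
  have : f (k : V) = 0 := k.2
  rw [this, zero_add]

lemma exists_units_factor {k : ℕ} (M N : Matrix (Fin k) (Fin k) ℝ) (h : M.rank = N.rank) :
    ∃ Q R : Matrix (Fin k) (Fin k) ℝ, IsUnit Q.det ∧ IsUnit R.det ∧ M = Q * N * R := by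
  obtain ⟨a, b, hab⟩ := exists_equiv_factor M.mulVecLin N.mulVecLin h
  have key : ∀ c : (Fin k → ℝ) ≃ₗ[ℝ] (Fin k → ℝ),
      IsUnit (LinearMap.toMatrix' c.toLinearMap).det := by
    intro c
    have h1 : LinearMap.toMatrix' c.toLinearMap * LinearMap.toMatrix' c.symm.toLinearMap
        = 1 := by
      rw [← LinearMap.toMatrix'_comp]
      have : c.toLinearMap ∘ₗ c.symm.toLinearMap = LinearMap.id := by
        ext v; simp
      rw [this, LinearMap.toMatrix'_id]
    have h2 : LinearMap.toMatrix' c.symm.toLinearMap * LinearMap.toMatrix' c.toLinearMap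
        = 1 := by
      rw [← LinearMap.toMatrix'_comp]
      have : c.symm.toLinearMap ∘ₗ c.toLinearMap = LinearMap.id := by
        ext v; simp
      rw [this, LinearMap.toMatrix'_id]
    exact (Matrix.isUnit_iff_isUnit_det _).mp ⟨⟨_, _, h1, h2⟩, rfl⟩
  refine ⟨LinearMap.toMatrix' a.toLinearMap, LinearMap.toMatrix' b.toLinearMap,
    key a, key b, ?_⟩
  have hM : M = LinearMap.toMatrix' M.mulVecLin := by
    rw [← Matrix.toLin'_apply', LinearMap.toMatrix'_toLin']
  have hN : N = LinearMap.toMatrix' N.mulVecLin := by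
    rw [← Matrix.toLin'_apply', LinearMap.toMatrix'_toLin']
  calc M = LinearMap.toMatrix' M.mulVecLin := hM
    _ = LinearMap.toMatrix' (a.toLinearMap ∘ₗ N.mulVecLin ∘ₗ b.toLinearMap) := by rw [hab]
    _ = _ := by
        rw [LinearMap.toMatrix'_comp, LinearMap.toMatrix'_comp, ← hN, Matrix.mul_assoc]

lemma matSimilar_fromBlocks {k : ℕ} (M N Q R : Matrix (Fin k) (Fin k) ℝ)
    (hQ : IsUnit Q.det) (hR : IsUnit R.det) (hMN : M = Q * N * R) :
    MatSimilar (Matrix.fromBlocks 0 0 M 0) (Matrix.fromBlocks 0 0 N 0) := by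
  refine ⟨Matrix.fromBlocks R⁻¹ 0 0 Q, ?_, ?_⟩
  · rw [Matrix.det_fromBlocks_zero₁₂]
    exact (Matrix.isUnit_nonsing_inv_det _ hR).mul hQ
  · have hPP' : Matrix.fromBlocks R⁻¹ 0 0 Q * Matrix.fromBlocks R 0 0 Q⁻¹ = 1 := by
      rw [Matrix.fromBlocks_multiply]
      simp [Matrix.nonsing_inv_mul _ hR, Matrix.mul_nonsing_inv _ hQ,
        ← Matrix.fromBlocks_one]
    rw [Matrix.inv_eq_right_inv hPP']
    rw [Matrix.fromBlocks_multiply, Matrix.fromBlocks_multiply]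
    simp [hMN, Matrix.mul_assoc]

noncomputable def elimL {p : ℕ} : (Fin p → ℝ) →ₗ[ℝ] (Fin p ⊕ Fin p → ℝ) where
  toFun v := Sum.elim 0 v
  map_add' u v := by funext a; cases a <;> simp
  map_smul' c v := by funext a; cases a <;> simp

lemma elimL_injective {p : ℕ} : Function.Injective (elimL (p := p)) := by
  intro u v h
  funext i
  have := congrFun h (Sum.inr i)
  simpa [elimL] using this

lemma rank_fromBlocks00 {p : ℕ} (M : Matrix (Fin p) (Fin p) ℝ) :
    (Matrix.fromBlocks 0 0 M 0 : Matrix (Fin p ⊕ Fin p) (Fin p ⊕ Fin p) ℝ).rank = M.rank := by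
  have hrange : LinearMap.range (Matrix.fromBlocks 0 0 M 0 :
      Matrix (Fin p ⊕ Fin p) (Fin p ⊕ Fin p) ℝ).mulVecLin
      = Submodule.map elimL (LinearMap.range M.mulVecLin) := by
    ext w
    constructor
    · rintro ⟨W, rfl⟩
      refine ⟨M.mulVec (fun i => W (Sum.inl i)), ⟨fun i => W (Sum.inl i), rfl⟩, ?_⟩
      have hW : W = Sum.elim (fun i => W (Sum.inl i)) (fun i => W (Sum.inr i)) := by
        funext a; cases a <;> rfl
      rw [Matrix.mulVecLin_apply, hW, Matrix.fromBlocks_mulVec]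
      funext a; cases a <;> simp [elimL]
    · rintro ⟨u, ⟨v, rfl⟩, rfl⟩
      refine ⟨Sum.elim v 0, ?_⟩
      show (Matrix.fromBlocks 0 0 M 0).mulVecLin (Sum.elim v 0) = elimL (M.mulVecLin v)
      rw [Matrix.mulVecLin_apply, Matrix.fromBlocks_mulVec]
      funext a; cases a <;> simp [elimL]
  rw [Matrix.rank, Matrix.rank, hrange,
    ← LinearEquiv.finrank_eq (Submodule.equivMapOfInjective elimL elimL_injective
      (LinearMap.range M.mulVecLin))]

end Abstract

section Main
variable {p : ℕ} {ψ : (Fin p → ℝ) → Fin p → Fin p → ℝ}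

lemma eps_one {r : ℕ} {π : Submodule ℝ (VV p)} {e : Fin r → VV p} {ε : Fin r → ℝ}
    (x : Fin p → ℝ) (hsig : HasSignature (gpsi ψ x) π 0 r)
    (hob : IsOrthoBasis (gpsi ψ x) π e ε) : ∀ m, ε m = 1 := by
  obtain ⟨hspan, hpm, hval⟩ := hob
  intro m
  rcases hpm m with h | h
  · exact h
  · exfalso
    have hem : e m ∈ π := by
      rw [← hspan]; exact Submodule.subset_span (Set.mem_range_self m)
    have hemne : e m ≠ 0 := by
      intro h0
      have h1 := hval m m
      rw [h0] at h1
      have h00 : gpsi ψ x (0 : VV p) 0 = 0 := by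
        have h2 : gpsi ψ x (0 : VV p) 0 = gbil ψ x (0 : VV p) 0 := rfl
        rw [h2]; simp
      rw [h00, if_pos rfl, h] at h1
      norm_num at h1
    have hW : (ℝ ∙ e m) ≤ π := (Submodule.span_singleton_le_iff_mem _ _).mpr hem
    have hneg : ∀ z ∈ (ℝ ∙ e m), z ≠ 0 → gpsi ψ x z z < 0 := by
      intro z hz hz0
      obtain ⟨a, rfl⟩ := Submodule.mem_span_singleton.mp hz
      have ha : a ≠ 0 := by rintro rfl; simp at hz0
      have hsc : gpsi ψ x (a • e m) (a • e m) = a * (a * gpsi ψ x (e m) (e m)) := by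
        show gbil ψ x (a • e m) (a • e m) = _
        simp only [map_smul, LinearMap.smul_apply, smul_eq_mul, gbil_apply]
      rw [hsc, hval m m, if_pos rfl, h]
      nlinarith [sq_nonneg a, sq_abs a, abs_pos.mpr ha]
    have hle := hsig.2.2.1 _ hW hneg
    rw [finrank_span_singleton hemne] at hle
    omega

lemma combo_zero {r : ℕ} {e : Fin r → VV p} {ε : Fin r → ℝ}
    (x : Fin p → ℝ)
    (hval : ∀ i j, gpsi ψ x (e i) (e j) = if i = j then ε i else 0)
    (hε : ∀ m, ε m = 1) (c : Fin r → ℝ)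
    (h : ∀ j, ∑ m, c m * e m (Sum.inl j) = 0) : ∀ m, c m = 0 := by
  have hz : ∀ j, (∑ m, c m • e m) (Sum.inl j) = 0 := by
    intro j
    rw [Finset.sum_apply]
    simpa using h j
  have h0 := gpsi_self_inl_zero (ψ := ψ) x _ hz
  rw [gpsi_combo x e ε hval c] at h0
  have hsum : ∑ m, c m ^ 2 = 0 := by
    rw [← h0]
    exact Finset.sum_congr rfl fun m _ => by rw [hε m]; ring
  intro m
  have hterm := (Finset.sum_eq_zero_iff_of_nonneg
    (fun i _ => sq_nonneg (c i))).mp hsum m (Finset.mem_univ m)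
  exact pow_eq_zero_iff (n := 2) (by norm_num) |>.mp hterm

open Matrix in
lemma ker_char (hψ : MemPsi ψ) (x : Fin p → ℝ) {r : ℕ} (e : Fin r → VV p) (ε : Fin r → ℝ)
    (hε : ∀ m, ε m = 1)
    (hX : ∀ m, (fun j => e m (Sum.inl j)) ≠ 0) (Y : Fin p → ℝ) :
    (bmat ψ x e ε).mulVec Y = 0 ↔
      ∀ m, ∃ c : ℝ, Y = c • (fun j => e m (Sum.inl j)) := by
  constructor
  · intro h m
    have hdot : ∀ Z, ∑ m', jacobiForm ψ x (fun j => e m' (Sum.inl j)) Y Z = 0 := by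
      intro Z
      have := dot_bmat_mulVec ψ x e ε Y Z
      rw [h, dotProduct_zero] at this
      have h2 : ∑ m', jacobiForm ψ x (fun j => e m' (Sum.inl j)) Y Z
          = ∑ m', ε m' * jacobiForm ψ x (fun j => e m' (Sum.inl j)) Y Z :=
        Finset.sum_congr rfl fun m' _ => by rw [hε m']; ring
      rw [h2, ← this]
    have hYY : ∀ m', jacobiForm ψ x (fun j => e m' (Sum.inl j)) Y Y = 0 := by
      have := hdot Y
      intro m'
      exact (Finset.sum_eq_zero_iff_of_nonneg
        (fun i _ => (hψ.2 x _ (hX i)).1 Y)).mp this m' (Finset.mem_univ m')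
    have hall : ∀ Z, jacobiForm ψ x (fun j => e m (Sum.inl j)) Y Z = 0 :=
      polarize x _ ((hψ.2 x _ (hX m)).1) hψ.1 Y (hYY m)
    exact ((hψ.2 x _ (hX m)).2 Y).mp hall
  · intro h
    have hz : ∀ Z : Fin p → ℝ, Z ⬝ᵥ (bmat ψ x e ε).mulVec Y = 0 := by
      intro Z
      rw [dot_bmat_mulVec]
      refine Finset.sum_eq_zero fun m _ => ?_
      rw [((hψ.2 x _ (hX m)).2 Y |>.mpr (h m)) Z, mul_zero]
    have := hz ((bmat ψ x e ε).mulVec Y)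
    exact dotProduct_self_eq_zero.mp this
end Main

section Main2
variable {p : ℕ} {ψ : (Fin p → ℝ) → Fin p → Fin p → ℝ}

lemma X_ne_zero {r : ℕ} {e : Fin r → VV p}
    (hindep : ∀ c : Fin r → ℝ, (∀ j, ∑ m, c m * e m (Sum.inl j) = 0) → ∀ m, c m = 0) :
    ∀ m : Fin r, (fun j => e m (Sum.inl j)) ≠ 0 := by
  intro m h0
  have hs : ∀ j, ∑ m', Pi.single (M := fun _ : Fin r => ℝ) m 1 m' * e m' (Sum.inl j) = 0 := by
    intro j
    have h1 : ∀ m' : Fin r, Pi.single (M := fun _ : Fin r => ℝ) m 1 m' * e m' (Sum.inl j)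
        = if m' = m then e m' (Sum.inl j) else 0 := by
      intro m'
      by_cases hm : m' = m <;> simp [Pi.single_apply, hm]
    rw [Finset.sum_congr rfl fun m' _ => h1 m', Finset.sum_ite_eq' Finset.univ m
      (fun m' => e m' (Sum.inl j))]
    simpa using congrFun h0 j
  have := hindep _ hs m
  simp at this

open Matrix in
lemma rank_bmat_r1 (hψ : MemPsi ψ) (x : Fin p → ℝ) (e : Fin 1 → VV p) (ε : Fin 1 → ℝ)
    (hε : ∀ m, ε m = 1)
    (hindep : ∀ c : Fin 1 → ℝ, (∀ j, ∑ m, c m * e m (Sum.inl j) = 0) → ∀ m, c m = 0) :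
    (bmat ψ x e ε).rank = p - 1 := by
  have hX := X_ne_zero hindep
  have hker : LinearMap.ker (bmat ψ x e ε).mulVecLin
      = ℝ ∙ (fun j => e 0 (Sum.inl j)) := by
    ext Y
    rw [LinearMap.mem_ker, Matrix.mulVecLin_apply, ker_char hψ x e ε hε hX Y,
      Submodule.mem_span_singleton]
    constructor
    · intro h
      obtain ⟨c, hc⟩ := h 0
      exact ⟨c, hc.symm⟩
    · rintro ⟨c, hc⟩ m
      have hm : m = 0 := Subsingleton.elim _ _
      subst hm
      exact ⟨c, hc.symm⟩
  have h1 := LinearMap.finrank_range_add_finrank_ker (bmat ψ x e ε).mulVecLin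
  rw [hker, finrank_span_singleton (hX 0), Module.finrank_fin_fun] at h1
  show Module.finrank ℝ (LinearMap.range (bmat ψ x e ε).mulVecLin) = p - 1
  omega

open Matrix in
lemma rank_bmat_r2 (hψ : MemPsi ψ) (x : Fin p → ℝ) {r : ℕ} (hr : 2 ≤ r)
    (e : Fin r → VV p) (ε : Fin r → ℝ) (hε : ∀ m, ε m = 1)
    (hindep : ∀ c : Fin r → ℝ, (∀ j, ∑ m, c m * e m (Sum.inl j) = 0) → ∀ m, c m = 0) :
    (bmat ψ x e ε).rank = p := by
  have hX := X_ne_zero hindep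
  have m0 : Fin r := ⟨0, by omega⟩
  have hker : LinearMap.ker (bmat ψ x e ε).mulVecLin = ⊥ := by
    rw [eq_bot_iff]
    intro Y hY
    rw [LinearMap.mem_ker, Matrix.mulVecLin_apply, ker_char hψ x e ε hε hX Y] at hY
    set m0 : Fin r := ⟨0, by omega⟩ with hm0def
    set m1 : Fin r := ⟨1, by omega⟩ with hm1def
    have hne : m0 ≠ m1 := by simp [hm0def, hm1def, Fin.ext_iff]
    obtain ⟨c0, h0⟩ := hY m0
    obtain ⟨c1, h1⟩ := hY m1
    set cc : Fin r → ℝ := fun m => if m = m0 then c0 else if m = m1 then -c1 else 0 with hcc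
    have hs : ∀ j, ∑ m, cc m * e m (Sum.inl j) = 0 := by
      intro j
      have hterm : ∀ m, cc m * e m (Sum.inl j)
          = (if m = m0 then c0 * e m (Sum.inl j) else 0)
            + (if m = m1 then -c1 * e m (Sum.inl j) else 0) := by
        intro m
        by_cases hm0 : m = m0
        · subst hm0
          simp [hcc, hne]
        · by_cases hm1 : m = m1 <;> simp [hcc, hm0, hm1, Ne.symm hne]
      rw [Finset.sum_congr rfl fun m _ => hterm m, Finset.sum_add_distrib,
        Finset.sum_ite_eq' Finset.univ m0 (fun m => c0 * e m (Sum.inl j)),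
        Finset.sum_ite_eq' Finset.univ m1 (fun m => -c1 * e m (Sum.inl j))]
      simp only [Finset.mem_univ, if_true]
      have e0 : c0 * e m0 (Sum.inl j) = Y j := by
        have := congrFun h0 j
        simp only [Pi.smul_apply, smul_eq_mul] at this
        exact this.symm
      have e1 : c1 * e m1 (Sum.inl j) = Y j := by
        have := congrFun h1 j
        simp only [Pi.smul_apply, smul_eq_mul] at this
        exact this.symm
      nlinarith [e0, e1]
    have hc0 : cc m0 = 0 := hindep cc hs m0
    have hc0' : c0 = 0 := by simpa [hcc] using hc0
    rw [hc0'] at h0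
    simp only [zero_smul] at h0
    simp [h0]
  have h1 := LinearMap.finrank_range_add_finrank_ker (bmat ψ x e ε).mulVecLin
  rw [hker, finrank_bot, Module.finrank_fin_fun] at h1
  show Module.finrank ℝ (LinearMap.range (bmat ψ x e ε).mulVecLin) = p
  omega

end Main2


/-- Let `ψ ∈ Ψ` and `1 ≤ r ≤ p`. For every point `(x,y)` and every
spacelike `r`-dimensional subspace `π` of `(ℝ^{2p}, g_ψ)` (signature `(0,r)`), one has
`rank J(π) = p-1` if `r = 1` and `rank J(π) = p` if `r ≥ 2`; moreover `J(π)² = 0`, and any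
two higher order Jacobi operators of spacelike `r`-dimensional subspaces are similar:
`(ℝ^{2p}, g_ψ)` is Jordan Osserman of type `(0,r)`. -/
theorem stmt10 (p r : ℕ) (hp : 2 ≤ p) (hr1 : 1 ≤ r) (hrp : r ≤ p)
    (ψ : (Fin p → ℝ) → Fin p → Fin p → ℝ) (hψ : MemPsi ψ) :
    (∀ (x y : Fin p → ℝ) (π : Submodule ℝ (VV p)) (e : Fin r → VV p) (ε : Fin r → ℝ),
      HasSignature (gpsi ψ x) π 0 r → IsOrthoBasis (gpsi ψ x) π e ε →
      (r = 1 → (hoJ ψ x e ε).rank = p - 1) ∧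
      (2 ≤ r → (hoJ ψ x e ε).rank = p) ∧
      hoJ ψ x e ε * hoJ ψ x e ε = 0) ∧
    (∀ (x₁ y₁ x₂ y₂ : Fin p → ℝ) (π₁ π₂ : Submodule ℝ (VV p))
      (e₁ e₂ : Fin r → VV p) (ε₁ ε₂ : Fin r → ℝ),
      HasSignature (gpsi ψ x₁) π₁ 0 r → IsOrthoBasis (gpsi ψ x₁) π₁ e₁ ε₁ →
      HasSignature (gpsi ψ x₂) π₂ 0 r → IsOrthoBasis (gpsi ψ x₂) π₂ e₂ ε₂ →
      MatSimilar (hoJ ψ x₁ e₁ ε₁) (hoJ ψ x₂ e₂ ε₂)) := by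
  constructor
  · intro x y π e ε hsig hob
    have hε := eps_one (ψ := ψ) x hsig hob
    have hval := hob.2.2
    have hindep := combo_zero (ψ := ψ) x hval hε
    refine ⟨?_, ?_, ?_⟩
    · intro hr
      subst hr
      rw [hoJ_eq_fromBlocks, rank_fromBlocks00, rank_bmat_r1 hψ x e ε hε hindep]
    · intro hr2
      rw [hoJ_eq_fromBlocks, rank_fromBlocks00, rank_bmat_r2 hψ x hr2 e ε hε hindep]
    · rw [hoJ_eq_fromBlocks, Matrix.fromBlocks_multiply]
      ext a b
      cases a <;> cases b <;> simp
  · intro x₁ y₁ x₂ y₂ π₁ π₂ e₁ e₂ ε₁ ε₂ hs1 ho1 hs2 ho2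
    have hε₁ := eps_one (ψ := ψ) x₁ hs1 ho1
    have hε₂ := eps_one (ψ := ψ) x₂ hs2 ho2
    have hindep₁ := combo_zero (ψ := ψ) x₁ ho1.2.2 hε₁
    have hindep₂ := combo_zero (ψ := ψ) x₂ ho2.2.2 hε₂
    have hrank : (bmat ψ x₁ e₁ ε₁).rank = (bmat ψ x₂ e₂ ε₂).rank := by
      by_cases hr2 : 2 ≤ r
      · rw [rank_bmat_r2 hψ x₁ hr2 e₁ ε₁ hε₁ hindep₁,
          rank_bmat_r2 hψ x₂ hr2 e₂ ε₂ hε₂ hindep₂]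
      · have hr : r = 1 := by omega
        subst hr
        rw [rank_bmat_r1 hψ x₁ e₁ ε₁ hε₁ hindep₁, rank_bmat_r1 hψ x₂ e₂ ε₂ hε₂ hindep₂]
    obtain ⟨Q, R, hQ, hR, hQR⟩ := exists_units_factor _ _ hrank
    rw [hoJ_eq_fromBlocks, hoJ_eq_fromBlocks]
    exact matSimilar_fromBlocks _ _ _ _ hQ hR hQR
end

section
/- Let p ≥ 2, u,v ≥ 0, and let ψ be any smooth symmetric 2-tensor field on ℝ^p. On N := ℝ^{2p} × ℝ^{u+v} with the product metric g_N of signature (p+u, p+v), for every point, every admissible (r,s) (0 ≤ r ≤ p+u, 0 ≤ s ≤ p+v, 1 ≤ r+s ≤ 2p+u+v−1), and every subspace π of signature (r,s), the higher order Jacobi operator satisfies J_N(π)² = 0; hence the characteristic polynomial of J_N(π) is t^{2p+u+v}, and (N, g_N) is k-Osserman for every admissible k. -/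
open scoped BigOperators

/-- The model space of the product `N = ℝ^{2p} × ℝ^{(u,v)}`. -/
abbrev VN (p u v : ℕ) := (Fin p ⊕ Fin p) ⊕ Fin (u + v) → ℝ

/-- The product metric `g_N = g_ψ ⊕ ⟨·,·⟩_{(u,v)}` of signature `(p+u, p+v)`,
where the flat factor has `u` negative and `v` positive directions. -/
noncomputable def gN {p : ℕ} (u v : ℕ) (ψ : (Fin p → ℝ) → Fin p → Fin p → ℝ)
    (x : Fin p → ℝ) (Z W : VN p u v) : ℝ :=
  gpsi ψ x (fun a => Z (Sum.inl a)) (fun a => W (Sum.inl a))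
    + ∑ i : Fin (u + v), (if (i : ℕ) < u then (-1 : ℝ) else 1) * Z (Sum.inr i) * W (Sum.inr i)

/-- The Jacobi operator of the product metric `g_N`: `J_N(x;Z)W = (J(x;Z_M)W_M, 0)`. -/
noncomputable def jacobiMatN {p : ℕ} (u v : ℕ) (ψ : (Fin p → ℝ) → Fin p → Fin p → ℝ)
    (x : Fin p → ℝ) (Z : VN p u v) :
    Matrix ((Fin p ⊕ Fin p) ⊕ Fin (u + v)) ((Fin p ⊕ Fin p) ⊕ Fin (u + v)) ℝ :=
  Matrix.of fun a b =>
    match a, b with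
    | Sum.inl a', Sum.inl b' => jacobiMat ψ x (fun c => Z (Sum.inl c)) a' b'
    | _, _ => 0

/-- The higher order Jacobi operator `J_N(π) := Σᵢ εᵢ J_N(x; eᵢ)` of `(N, g_N)`. -/
noncomputable def hoJN {p : ℕ} (u v : ℕ) (ψ : (Fin p → ℝ) → Fin p → Fin p → ℝ)
    (x : Fin p → ℝ) {n : ℕ} (e : Fin n → VN p u v) (ε : Fin n → ℝ) :
    Matrix ((Fin p ⊕ Fin p) ⊕ Fin (u + v)) ((Fin p ⊕ Fin p) ⊕ Fin (u + v)) ℝ :=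
  ∑ i, ε i • jacobiMatN u v ψ x (e i)

/-- For any smooth symmetric 2-tensor field `ψ`, on
`N = ℝ^{2p} × ℝ^{u+v}` with the product metric `g_N` of signature `(p+u, p+v)`, for every
point, every admissible `(r,s)` and every subspace `π` of signature `(r,s)`, the higher
order Jacobi operator satisfies `J_N(π)² = 0`; hence its characteristic polynomial is
`t^{2p+u+v}` and `(N, g_N)` is `k`-Osserman for every admissible `k`. -/
theorem stmt13 (p u v : ℕ) (hp : 2 ≤ p) (ψ : (Fin p → ℝ) → Fin p → Fin p → ℝ)
    (hψ : IsSmoothSym ψ) (x y : Fin p → ℝ) (w : Fin (u + v) → ℝ)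
    (r s : ℕ) (hr : r ≤ p + u) (hs : s ≤ p + v) (hrs1 : 1 ≤ r + s)
    (hrs2 : r + s ≤ 2 * p + u + v - 1)
    (π : Submodule ℝ (VN p u v)) (hπ : HasSignature (gN u v ψ x) π r s)
    (e : Fin (r + s) → VN p u v) (ε : Fin (r + s) → ℝ)
    (he : IsOrthoBasis (gN u v ψ x) π e ε) :
    hoJN u v ψ x e ε * hoJN u v ψ x e ε = 0 ∧
    (hoJN u v ψ x e ε).charpoly = Polynomial.X ^ (2 * p + u + v) := by
  classical
  set J := hoJN u v ψ x e ε with hJdef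
  have hrow : ∀ (a b : (Fin p ⊕ Fin p) ⊕ Fin (u + v)),
      (∀ l, a ≠ Sum.inl (Sum.inr l)) → J a b = 0 := by
    intro a b ha
    simp only [hJdef, hoJN, Matrix.sum_apply, Matrix.smul_apply, smul_eq_mul]
    apply Finset.sum_eq_zero
    intro i _
    have : jacobiMatN u v ψ x (e i) a b = 0 := by
      rcases a with (a'|a')|m
      · rcases b with (b'|b')|m'
        · simp [jacobiMatN, jacobiMat]
        · simp [jacobiMatN, jacobiMat]
        · simp [jacobiMatN]
      · exact absurd rfl (ha a')
      · simp [jacobiMatN]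
    simp [this]
  have hcol : ∀ (a b : (Fin p ⊕ Fin p) ⊕ Fin (u + v)),
      (∀ l, b ≠ Sum.inl (Sum.inl l)) → J a b = 0 := by
    intro a b hb
    simp only [hJdef, hoJN, Matrix.sum_apply, Matrix.smul_apply, smul_eq_mul]
    apply Finset.sum_eq_zero
    intro i _
    have : jacobiMatN u v ψ x (e i) a b = 0 := by
      rcases a with (a'|a')|m
      · rcases b with (b'|b')|m' <;> simp [jacobiMatN, jacobiMat]
      · rcases b with (b'|b')|m'
        · exact absurd rfl (hb b')
        · simp [jacobiMatN, jacobiMat]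
        · simp [jacobiMatN]
      · simp [jacobiMatN]
    simp [this]
  have hsq : J * J = 0 := by
    ext a b
    simp only [Matrix.mul_apply, Matrix.zero_apply]
    apply Finset.sum_eq_zero
    intro c _
    rcases c with (c'|c')|m
    · rw [hrow (Sum.inl (Sum.inl c')) b (by intro l h; simp at h)]; ring
    · rw [hcol a (Sum.inl (Sum.inr c')) (by intro l h; simp at h)]; ring
    · rw [hrow (Sum.inr m) b (by intro l h; simp at h)]; ring
  refine ⟨hsq, ?_⟩
  have hnil : IsNilpotent J := ⟨2, by rw [pow_two]; exact hsq⟩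
  have h := Matrix.isNilpotent_charpoly_sub_pow_of_isNilpotent hnil
  have h0 : J.charpoly - Polynomial.X ^ (Fintype.card ((Fin p ⊕ Fin p) ⊕ Fin (u + v))) = 0 :=
    h.eq_zero
  have hcard : Fintype.card ((Fin p ⊕ Fin p) ⊕ Fin (u + v)) = 2 * p + u + v := by
    simp [Fintype.card_sum]; ring
  rw [hcard] at h0
  linear_combination (norm := ring_nf) h0
end
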